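/- arXiv:1411.0132 — 2 statements merged into one kernel-verified Lean document; each statement's English description precedes it below -/
import Mathlib

section
/- Let G be a non-Eulerian connected simple graph of order n with exactly 2k odd-degree vertices, and let P be any complete partition of E(G) into k trails. If f : E(G) → {−1, 1} assigns values +1 and −1 alternately along each trail of P (starting each trail with +1 when the trail has odd length), then f is a signed submatching of G and f(E(G)) = τ(P), the number of odd-length trails in P. Consequently β_S^n(G) ≥ η(G). -/
open Finset

variable {V : Type*}

/-- Sum of `f` over all edges of `G`. -/
noncomputable def edgeSum (G : SimpleGraph V) (f : Sym2 V → ℤ) : ℤ :=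
  ∑ᶠ e ∈ G.edgeSet, f e

/-- Sum of `f` over all edges of `G` incident with `v`, i.e. `f(E_G(v))`. -/
noncomputable def vertexSum (G : SimpleGraph V) (f : Sym2 V → ℤ) (v : V) : ℤ :=
  ∑ᶠ e ∈ {e ∈ G.edgeSet | v ∈ e}, f e

/-- `f` is a signed `k`-submatching of `G`: it takes values `±1` on edges and
`f(E_G(v)) ≤ 1` for at least `k` vertices. -/
def IsSignedSubmatching (G : SimpleGraph V) (f : Sym2 V → ℤ) (k : ℕ) : Prop :=
  (∀ e ∈ G.edgeSet, f e = 1 ∨ f e = -1) ∧ k ≤ {v | vertexSum G f v ≤ 1}.ncard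

/-- The signed `k`-submatching number `β_S^k(G)`. -/
noncomputable def betaS (G : SimpleGraph V) (k : ℕ) : ℤ :=
  sSup {s : ℤ | ∃ f, IsSignedSubmatching G f k ∧ s = edgeSum G f}

/-- `P` is a complete partition of `E(G)` into `k` edge-disjoint trails. -/
def IsCompletePartition (G : SimpleGraph V) {k : ℕ}
    (P : Fin k → Σ u : V, Σ v : V, G.Walk u v) : Prop :=
  (∀ i, (P i).2.2.IsTrail) ∧
  (∀ i j, i ≠ j → ∀ e, e ∈ (P i).2.2.edges → e ∉ (P j).2.2.edges) ∧
  (∀ e, e ∈ G.edgeSet ↔ ∃ i, e ∈ (P i).2.2.edges)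

/-- `τ(P)`: the number of trails in the partition with an odd number of edges. -/
noncomputable def tauP {G : SimpleGraph V} {k : ℕ}
    (P : Fin k → Σ u : V, Σ v : V, G.Walk u v) : ℕ :=
  {i | Odd (P i).2.2.length}.ncard

/-- `η(G)`: the maximum of `τ(P)` over all complete partitions of `G` into `k` trails. -/
noncomputable def eta (G : SimpleGraph V) (k : ℕ) : ℕ :=
  sSup {t : ℕ | ∃ P : Fin k → Σ u : V, Σ v : V, G.Walk u v,
    IsCompletePartition G P ∧ t = tauP P}

/-!
Along a trail with alternating signs, the two edges through an interior visit of a vertex cancel,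
so only the first and the last edge count: a trail adds at most `1` to `f(E(v))` for each of its
ends at `v`, and its total is `1` or `0` according as its length is odd or even (odd trails start
with `+1`). The number of trail ends at `v` has the parity of `deg v`, so each of the `2k` odd
vertices carries at least one of the `2k` ends; hence every vertex carries at most one end and
`f(E(v)) ≤ 1`. Every complete partition carries such an alternating sign, so `τ(P) ≤ β_S^n(G)`
for all `P`, which gives `η(G) ≤ β_S^n(G)`.
-/

open SimpleGraph

namespace List

variable {α : Type*}

theorem sum_map_of_isChain_neg {f : α → ℤ} : ∀ {l : List α},
    l.IsChain (fun a b => f b = -f a) →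
      (l.map f).sum = if Even l.length then 0 else l.head?.elim 0 f
  | [], _ => by simp
  | [a], _ => by simp
  | a :: b :: t, h => by
    obtain ⟨hab, hbt⟩ := isChain_cons_cons.mp h
    rw [map_cons, sum_cons, sum_map_of_isChain_neg hbt]
    by_cases ht : Even t.length <;> simp [hab, ht, parity_simps]

theorem sum_map_ite_one_zero (p : α → Prop) [DecidablePred p] (l : List α) :
    (l.map fun a => if p a then 1 else 0).sum = l.countP (fun a => p a) := by
  induction l with
  | nil => rfl
  | cons a l ih => by_cases h : p a <;> simp [h, ih, Nat.add_comm]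

end List

namespace SimpleGraph.Walk

variable {G : SimpleGraph V}

theorem sum_incident_of_isChain_neg [DecidableEq V] {f : Sym2 V → ℤ} (v : V) {u w : V}
    (p : G.Walk u w) (hp : p.edges.IsChain (fun a b => f b = -f a)) :
    (p.edges.map fun e => if v ∈ e then f e else 0).sum =
      (if v = u then p.edges.head?.elim 0 f else 0) +
        (if v = w then p.edges.getLast?.elim 0 f else 0) := by
  induction p with
  | nil => simp
  | @cons u x w h p ih =>
    have hux : u ≠ x := h.ne
    cases p with
    | nil => by_cases hu : v = u <;> by_cases hx : v = x <;> simp_all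
    | cons h' q =>
      rw [edges_cons, edges_cons] at hp ⊢
      obtain ⟨hb, hq⟩ := List.isChain_cons_cons.mp hp
      rw [edges_cons] at ih
      rw [List.map_cons, List.sum_cons, ih hq, List.getLast?_cons_cons]
      by_cases hu : v = u <;> by_cases hx : v = x <;> simp_all

theorem IsTrail.countP_edges_modEq [DecidableEq V] {u w : V} {p : G.Walk u w}
    (hp : p.IsTrail) (x : V) :
    p.edges.countP (fun e => x ∈ e) ≡ (if x = u then 1 else 0) + (if x = w then 1 else 0)
      [MOD 2] := by
  unfold Nat.ModEq
  have h := hp.even_countP_edges_iff x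
  rw [Nat.even_iff] at h
  by_cases hu : x = u <;> by_cases hw : x = w
  · subst hu hw
    simpa using h
  · subst hu
    have : p.edges.countP (fun e => x ∈ e) % 2 ≠ 0 := fun h0 => (h.mp h0 hw).1 rfl
    simp only [hw, ite_true, ite_false]
    omega
  · subst hw
    have : p.edges.countP (fun e => x ∈ e) % 2 ≠ 0 := fun h0 => (h.mp h0 (Ne.symm hu)).2 rfl
    simp only [hu, ite_true, ite_false]
    omega
  · simp only [hu, hw, ite_false]
    exact h.mpr fun _ => ⟨hu, hw⟩

end SimpleGraph.Walk

theorem le_one_of_sum_le_card_odd {ι : Type*} [Fintype ι] (g : ι → ℕ)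
    (h : ∑ i, g i ≤ #{i | Odd (g i)}) (i : ι) : g i ≤ 1 := by
  by_contra! hi
  have hlt : ∑ j, (if Odd (g j) then 1 else 0) < ∑ j, g j :=
    sum_lt_sum (fun j _ => by split_ifs with hj; exacts [hj.pos, Nat.zero_le _])
      ⟨i, mem_univ i, by split_ifs <;> omega⟩
  rw [← card_filter] at hlt
  omega

theorem Int.natCast_sSup_le {T : Set ℕ} {b : ℤ} (hT : T.Nonempty) (h : ∀ t ∈ T, (t : ℤ) ≤ b) :
    ((sSup T : ℕ) : ℤ) ≤ b :=
  h _ <| Nat.sSup_mem hT ⟨b.toNat, fun t ht => by have := h t ht; omega⟩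

section CompletePartition

variable {G : SimpleGraph V} {k : ℕ} {P : Fin k → Σ u : V, Σ v : V, G.Walk u v}

def endpointCount [DecidableEq V] (P : Fin k → Σ u : V, Σ v : V, G.Walk u v) (x : V) : ℕ :=
  ∑ i, ((if x = (P i).1 then 1 else 0) + (if x = (P i).2.1 then 1 else 0))

theorem sum_endpointCount [Fintype V] [DecidableEq V] :
    ∑ x, endpointCount P x = 2 * k := by
  simp only [endpointCount]
  rw [sum_comm]
  simp [sum_add_distrib, mul_comm]

namespace IsCompletePartition

theorem mem_edgeSet (hP : IsCompletePartition G P) {i : Fin k} {e : Sym2 V}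
    (he : e ∈ (P i).2.2.edges) : e ∈ G.edgeSet :=
  (hP.2.2 e).mpr ⟨i, he⟩

theorem finsum_edgeSet (hP : IsCompletePartition G P) {M : Type*} [AddCommMonoid M]
    (g : Sym2 V → M) : ∑ᶠ e ∈ G.edgeSet, g e = ∑ i, ((P i).2.2.edges.map g).sum := by
  classical
  have hcover : G.edgeSet = ↑(univ.biUnion fun i => (P i).2.2.edges.toFinset) := by
    ext e
    simp [hP.2.2 e]
  have hdisj : ((univ : Finset (Fin k)) : Set (Fin k)).PairwiseDisjoint
      fun i => (P i).2.2.edges.toFinset := fun i _ j _ hij =>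
    disjoint_left.mpr fun e hi hj => hP.2.1 i j hij e (by simpa using hi) (by simpa using hj)
  rw [hcover, finsum_mem_coe_finset, sum_biUnion hdisj]
  exact sum_congr rfl fun i _ => List.sum_toFinset g (hP.1 i).edges_nodup

theorem edgeSum_eq_tauP (hP : IsCompletePartition G P) {f : Sym2 V → ℤ}
    (halt : ∀ i, (P i).2.2.edges.IsChain fun a b => f b = -f a)
    (hstart : ∀ i, Odd (P i).2.2.length →
      ∀ h : (P i).2.2.edges ≠ [], f ((P i).2.2.edges.head h) = 1) :
    edgeSum G f = tauP P := by
  have htrail : ∀ i, ((P i).2.2.edges.map f).sum = if Odd (P i).2.2.length then 1 else 0 := by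
    intro i
    rw [List.sum_map_of_isChain_neg (halt i), ← Walk.length_edges]
    by_cases hodd : Odd (P i).2.2.edges.length
    · have hne : (P i).2.2.edges ≠ [] := by rintro h; simp [h] at hodd
      rw [if_neg (Nat.not_even_iff_odd.mpr hodd), if_pos hodd, List.head?_eq_some_head hne]
      exact hstart i (by rwa [← Walk.length_edges]) hne
    · rw [if_pos (Nat.not_odd_iff_even.mp hodd), if_neg hodd]
  rw [edgeSum, hP.finsum_edgeSet, sum_congr rfl fun i _ => htrail i, sum_boole, tauP,
    Set.ncard_eq_toFinset_card', Set.toFinset_ofPred]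

theorem exists_alternating (hP : IsCompletePartition G P) :
    ∃ f : Sym2 V → ℤ, (∀ e ∈ G.edgeSet, f e = 1 ∨ f e = -1) ∧
      (∀ i, (P i).2.2.edges.IsChain fun a b => f b = -f a) ∧
      ∀ i (h : (P i).2.2.edges ≠ []), f ((P i).2.2.edges.head h) = 1 := by
  classical
  let f : Sym2 V → ℤ := fun e =>
    if ∃ i, e ∈ (P i).2.2.edges ∧ Odd ((P i).2.2.edges.idxOf e) then -1 else 1
  have hf : ∀ i (j : ℕ) (hj : j < (P i).2.2.edges.length), f (P i).2.2.edges[j] = (-1) ^ j := by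
    intro i j hj
    have hidx := (hP.1 i).edges_nodup.idxOf_getElem j hj
    have hmem := List.getElem_mem hj
    have hiff : (∃ i', (P i).2.2.edges[j] ∈ (P i').2.2.edges ∧
        Odd ((P i').2.2.edges.idxOf (P i).2.2.edges[j])) ↔ Odd j := by
      refine ⟨fun ⟨i', hi', hodd⟩ => ?_, fun hodd => ⟨i, hmem, by rwa [hidx]⟩⟩
      obtain rfl : i' = i := by_contra fun hne => hP.2.1 i' i hne _ hi' hmem
      rwa [hidx] at hodd
    rcases Nat.even_or_odd j with hj | hj
    · simp [f, hiff, hj.neg_one_pow, Nat.not_odd_iff_even.mpr hj]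
    · simp [f, hiff, hj.neg_one_pow, hj]
  refine ⟨f, fun e _ => by unfold f; split_ifs <;> simp, fun i => ?_, fun i h => ?_⟩
  · exact List.isChain_iff_getElem.mpr fun j hj => by rw [hf, hf, pow_succ]; ring
  · rw [List.head_eq_getElem, hf, pow_zero]

variable [Fintype V] [DecidableRel G.Adj]

theorem degree_eq_sum_countP [DecidableEq V] (hP : IsCompletePartition G P) (x : V) :
    G.degree x = ∑ i, (P i).2.2.edges.countP (fun e => x ∈ e) := by
  rw [← card_incidenceFinset_eq_degree, incidenceFinset_eq_filter, card_filter,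
    ← finsum_mem_coe_finset, coe_edgeFinset, hP.finsum_edgeSet]
  simp only [List.sum_map_ite_one_zero]

theorem endpointCount_modEq_degree [DecidableEq V] (hP : IsCompletePartition G P) (x : V) :
    endpointCount P x ≡ G.degree x [MOD 2] := by
  rw [hP.degree_eq_sum_countP]
  exact Nat.ModEq.sum fun i _ => ((hP.1 i).countP_edges_modEq x).symm

theorem endpointCount_le_one [DecidableEq V] (hP : IsCompletePartition G P)
    (hodd : {v | Odd (G.degree v)}.ncard = 2 * k) (x : V) : endpointCount P x ≤ 1 := by
  refine le_one_of_sum_le_card_odd _ (le_of_eq ?_) x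
  rw [sum_endpointCount, ← hodd, Set.ncard_eq_toFinset_card', Set.toFinset_ofPred]
  congr 1
  ext v
  have : endpointCount P v % 2 = G.degree v % 2 := hP.endpointCount_modEq_degree v
  simp only [mem_filter, Nat.odd_iff, this]

theorem vertexSum_le_one (hP : IsCompletePartition G P)
    (hodd : {v | Odd (G.degree v)}.ncard = 2 * k) {f : Sym2 V → ℤ}
    (hf : ∀ e ∈ G.edgeSet, f e ≤ 1) (halt : ∀ i, (P i).2.2.edges.IsChain fun a b => f b = -f a)
    (v : V) : vertexSum G f v ≤ 1 := by
  classical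
  have hle : ∀ i, ∀ o : Option (Sym2 V), (∀ e ∈ o, e ∈ (P i).2.2.edges) → o.elim 0 f ≤ 1 := by
    rintro i (_ | e) he
    · simp
    · exact hf e (hP.mem_edgeSet (he e rfl))
  calc vertexSum G f v
      = ∑ i, ((P i).2.2.edges.map fun e => if v ∈ e then f e else 0).sum := by
        have hinc : {e ∈ G.edgeSet | v ∈ e} = ↑({e ∈ G.edgeFinset | v ∈ e}) := by
          ext e
          simp
        rw [vertexSum, hinc, finsum_mem_coe_finset, sum_filter, ← finsum_mem_coe_finset,
          coe_edgeFinset, hP.finsum_edgeSet]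
    _ ≤ ∑ i, ((if v = (P i).1 then 1 else 0) + (if v = (P i).2.1 then 1 else 0) : ℤ) := by
        refine sum_le_sum fun i _ => ?_
        rw [Walk.sum_incident_of_isChain_neg v _ (halt i)]
        gcongr <;> split_ifs
        exacts [hle i _ fun e => List.mem_of_mem_head?, le_rfl,
          hle i _ fun e => List.mem_of_mem_getLast?, le_rfl]
    _ = endpointCount P v := by simp [endpointCount]
    _ ≤ 1 := by exact_mod_cast hP.endpointCount_le_one hodd v

theorem isSignedSubmatching (hP : IsCompletePartition G P)
    (hodd : {v | Odd (G.degree v)}.ncard = 2 * k) {f : Sym2 V → ℤ}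
    (hf1 : ∀ e ∈ G.edgeSet, f e = 1 ∨ f e = -1)
    (halt : ∀ i, (P i).2.2.edges.IsChain fun a b => f b = -f a) :
    IsSignedSubmatching G f (Fintype.card V) := by
  have hle : ∀ e ∈ G.edgeSet, f e ≤ 1 := fun e he => by rcases hf1 e he with h | h <;> omega
  have huniv : {v | vertexSum G f v ≤ 1} = Set.univ :=
    Set.eq_univ_of_forall (hP.vertexSum_le_one hodd hle halt)
  refine ⟨hf1, ?_⟩
  rw [huniv, Set.ncard_univ, Nat.card_eq_fintype_card]

end IsCompletePartition

end CompletePartition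

theorem edgeSum_le_card_edgeFinset (G : SimpleGraph V) [Fintype G.edgeSet] {f : Sym2 V → ℤ}
    (hf : ∀ e ∈ G.edgeSet, f e ≤ 1) : edgeSum G f ≤ #G.edgeFinset := by
  rw [edgeSum, ← coe_edgeFinset, finsum_mem_coe_finset, ← nsmul_one, ← sum_const]
  exact sum_le_sum fun e he => hf e (mem_edgeFinset.mp he)

theorem bddAbove_edgeSum_isSignedSubmatching (G : SimpleGraph V) [Finite G.edgeSet] (n : ℕ) :
    BddAbove {s : ℤ | ∃ f, IsSignedSubmatching G f n ∧ s = edgeSum G f} := by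
  have := Fintype.ofFinite G.edgeSet
  refine ⟨#G.edgeFinset, ?_⟩
  rintro _ ⟨f, hf, rfl⟩
  exact edgeSum_le_card_edgeFinset G fun e he => by rcases hf.1 e he with h | h <;> omega

theorem eta_le_betaS [Fintype V] (G : SimpleGraph V) [DecidableRel G.Adj] {k : ℕ}
    (hodd : {v | Odd (G.degree v)}.ncard = 2 * k)
    (hP : ∃ P : Fin k → Σ u : V, Σ v : V, G.Walk u v, IsCompletePartition G P) :
    (eta G k : ℤ) ≤ betaS G (Fintype.card V) := by
  obtain ⟨P, hP⟩ := hP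
  refine Int.natCast_sSup_le ⟨_, P, hP, rfl⟩ ?_
  rintro _ ⟨Q, hQ, rfl⟩
  obtain ⟨f, hf1, halt, hstart⟩ := hQ.exists_alternating
  exact le_csSup (bddAbove_edgeSum_isSignedSubmatching G _)
    ⟨f, hQ.isSignedSubmatching hodd hf1 halt, (hQ.edgeSum_eq_tauP halt fun i _ => hstart i).symm⟩

theorem alternating_on_partition_is_submatching_general [Fintype V] (G : SimpleGraph V)
    [DecidableRel G.Adj]
    (k : ℕ) (hodd : {v | Odd (G.degree v)}.ncard = 2 * k)
    (P : Fin k → Σ u : V, Σ v : V, G.Walk u v) (hP : IsCompletePartition G P)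
    (f : Sym2 V → ℤ) (hf1 : ∀ e ∈ G.edgeSet, f e = 1 ∨ f e = -1)
    (halt : ∀ i, List.Chain' (fun a b => f b = - f a) (P i).2.2.edges)
    (hstart : ∀ i, Odd (P i).2.2.length →
      ∀ h : (P i).2.2.edges ≠ [], f ((P i).2.2.edges.head h) = 1) :
    IsSignedSubmatching G f (Fintype.card V) ∧ edgeSum G f = (tauP P : ℤ) ∧
    (eta G k : ℤ) ≤ betaS G (Fintype.card V) :=
  ⟨hP.isSignedSubmatching hodd hf1 halt, hP.edgeSum_eq_tauP halt hstart,
    eta_le_betaS G hodd ⟨P, hP⟩⟩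

theorem alternating_on_partition_is_submatching [Fintype V] (G : SimpleGraph V)
    [DecidableRel G.Adj]
    (hconn : G.Connected) (hnotEuler : ¬ ∀ v, Even (G.degree v))
    (k : ℕ) (hodd : {v | Odd (G.degree v)}.ncard = 2 * k)
    (P : Fin k → Σ u : V, Σ v : V, G.Walk u v) (hP : IsCompletePartition G P)
    (f : Sym2 V → ℤ) (hf1 : ∀ e ∈ G.edgeSet, f e = 1 ∨ f e = -1)
    (halt : ∀ i, List.Chain' (fun a b => f b = - f a) (P i).2.2.edges)
    (hstart : ∀ i, Odd (P i).2.2.length →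
      ∀ h : (P i).2.2.edges ≠ [], f ((P i).2.2.edges.head h) = 1) :
    IsSignedSubmatching G f (Fintype.card V) ∧ edgeSum G f = (tauP P : ℤ) ∧
    (eta G k : ℤ) ≤ betaS G (Fintype.card V) :=
  alternating_on_partition_is_submatching_general G k hodd P hP f hf1 halt hstart
end

section
/- Let G be a non-Eulerian connected simple graph of order n and let f be a signed submatching of G attaining β_S^n(G) which, among all such optimal signed submatchings, maximizes |O_f(G)| where O_f(G) = {v : d(v) odd and f(E_G(v)) < 1}. Then f(E_G(v)) ≥ −1 for every vertex v of G. -/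
open Finset

variable {V : Type*}

/-!
Suppose `f(E(v)) ≤ -2`. Call a trail ending at `v` alternating if its signs read `…, 1, -1`
towards `v`. Flipping all signs along an alternating trail from `z` changes only `f(E(v))`
(by `+2`) and `f(E(z))`. If the trail starts with a negative edge the total weight grows by 2;
if it starts with a positive edge at a vertex with `f(E(z)) = 1`, the total weight is unchanged
but the odd vertex `z` joins `O_f`. Both contradict the choice of `f`. Hence every alternating
trail that cannot be extended is a closed trail at `v`, ending in negative edges on both sides
and using every edge at `v`. Every vertex `z ≠ v` of such a circuit is the start of alternating
subtrails of either initial sign, which forces `f(E(z)) = 0`. The circuits can be rerouted along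
any edge leaving them, so by connectivity they reach every vertex. Thus
`d(z) ≡ f(E(z)) ≡ 0 (mod 2)` for all `z ≠ v`, by the handshake lemma `d(v)` is even as well,
and `G` would be Eulerian.
-/

open SimpleGraph

theorem SimpleGraph.Reachable.mem_of_adj_closed {G : SimpleGraph V} {s : Set V} {u v : V}
    (h : G.Reachable u v) (hs : ∀ x y, G.Adj x y → x ∈ s → y ∈ s) (hu : u ∈ s) :
    v ∈ s := by
  rw [reachable_iff_reflTransGen] at h
  induction h with
  | refl => exact hu
  | tail _ hadj ih => exact hs _ _ hadj ih

theorem SimpleGraph.even_degree_of_forall_ne [Fintype V] [DecidableEq V] {G : SimpleGraph V}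
    [DecidableRel G.Adj] (v : V) (h : ∀ u ≠ v, Even (G.degree u)) (u : V) :
    Even (G.degree u) := by
  rcases eq_or_ne u v with rfl | hu
  · by_contra hodd
    have := G.odd_card_odd_degree_vertices_ne u (Nat.not_even_iff_odd.mp hodd)
    rw [filter_false_of_mem fun w _ hw => Nat.not_odd_iff_even.mpr (h w hw.1) hw.2] at this
    simp at this
  · exact h u hu

section Sums

variable [Fintype V] {G : SimpleGraph V} {f : Sym2 V → ℤ}

theorem isSignedSubmatching_card (hf : ∀ e ∈ G.edgeSet, f e = 1 ∨ f e = -1)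
    (hle : ∀ v, vertexSum G f v ≤ 1) : IsSignedSubmatching G f (Fintype.card V) := by
  have huniv : {v | vertexSum G f v ≤ 1} = Set.univ := Set.eq_univ_of_forall hle
  exact ⟨hf, by rw [huniv, Set.ncard_univ, Nat.card_eq_fintype_card]⟩

variable [DecidableRel G.Adj]

theorem edgeSum_eq_sum : edgeSum G f = ∑ e ∈ G.edgeFinset, f e := by
  rw [edgeSum, ← finsum_mem_coe_finset, coe_edgeFinset]

theorem edgeSum_le_betaS {k : ℕ} (hf : IsSignedSubmatching G f k) :
    edgeSum G f ≤ betaS G k := by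
  refine le_csSup ⟨#G.edgeFinset, ?_⟩ ⟨f, hf, rfl⟩
  rintro _ ⟨g, hg, rfl⟩
  rw [edgeSum_eq_sum, card_eq_sum_ones, Nat.cast_sum, Nat.cast_one]
  refine sum_le_sum fun e he => ?_
  rcases hg.1 e (mem_edgeFinset.mp he) with h | h <;> omega

variable [DecidableEq V]

theorem vertexSum_eq_sum (v : V) : vertexSum G f v = ∑ e ∈ G.incidenceFinset v, f e := by
  rw [vertexSum, ← finsum_mem_coe_finset, coe_incidenceFinset]
  rfl

theorem even_degree_iff_even_vertexSum (hf : ∀ e ∈ G.edgeSet, f e = 1 ∨ f e = -1) (v : V) :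
    Even (G.degree v) ↔ Even (vertexSum G f v) := by
  have hdiff : (G.degree v : ℤ) - vertexSum G f v = ∑ e ∈ G.incidenceFinset v, (1 - f e) := by
    rw [vertexSum_eq_sum, sum_sub_distrib, sum_const, card_incidenceFinset_eq_degree, nsmul_one]
  have heven : Even ((G.degree v : ℤ) - vertexSum G f v) := by
    rw [hdiff]
    refine even_sum _ fun e he => ?_
    rcases hf e (G.incidenceSet_subset v (by simpa using he)) with h | h <;> simp [h]
  rw [← Int.even_coe_nat, ← Int.even_sub.mp heven]

theorem exists_adj_neg_of_vertexSum_neg (hf : ∀ e ∈ G.edgeSet, f e = 1 ∨ f e = -1) {v : V}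
    (hv : vertexSum G f v < 0) : ∃ x, G.Adj x v ∧ f s(x, v) = -1 := by
  rw [vertexSum_eq_sum, ← sum_const_zero (s := G.incidenceFinset v)] at hv
  obtain ⟨e, he, hneg⟩ := exists_lt_of_sum_lt hv
  obtain ⟨he, hve⟩ := (mem_incidenceFinset _ _ _).mp he
  obtain ⟨x, rfl⟩ := Sym2.mem_iff_exists.mp hve
  refine ⟨x, (G.mem_edgeSet.mp he).symm, ?_⟩
  rw [Sym2.eq_swap]
  rcases hf _ he with h | h <;> omega

end Sums

inductive Alternating : ℤ → ℤ → List ℤ → Prop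
  | single (s : ℤ) : Alternating s s [s]
  | cons (s t : ℤ) {l : List ℤ} : Alternating (-s) t l → Alternating s t (s :: l)

namespace Alternating

variable {s t : ℤ} {l : List ℤ}

theorem ne_nil (h : Alternating s t l) : l ≠ [] := by
  cases h <;> simp

theorem head_mem (h : Alternating s t l) : s ∈ l := by
  cases h <;> simp

theorem cons_iff {a : ℤ} :
    Alternating s t (a :: l) ↔ a = s ∧ (l = [] ∧ t = s ∨ Alternating (-s) t l) := by
  constructor
  · rintro (_ | ⟨_, _, h⟩)
    exacts [⟨rfl, .inl ⟨rfl, rfl⟩⟩, ⟨rfl, .inr h⟩]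
  · rintro ⟨rfl, ⟨rfl, rfl⟩ | h⟩
    exacts [single _, cons _ _ h]

theorem two_mul_sum (h : Alternating s t l) : 2 * l.sum = s + t := by
  induction h with
  | single s => simp [two_mul]
  | cons s t _ ih => simp only [List.sum_cons]; linarith

theorem eq_or_eq_neg (h : Alternating s t l) : t = s ∨ t = -s := by
  induction h with
  | single s => exact .inl rfl
  | cons s t _ ih => omega

theorem concat (h : Alternating s t l) : Alternating s (-t) (l ++ [-t]) := by
  induction h with
  | single s => exact .cons _ _ (by simpa using single (-s))
  | cons s t _ ih => exact .cons _ _ ih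

theorem reverse (h : Alternating s t l) : Alternating t s l.reverse := by
  induction h with
  | single s => simpa using single s
  | cons s t _ ih => simpa using ih.concat

theorem exists_of_append {l₁ l₂ : List ℤ} (h : Alternating s t (l₁ ++ l₂))
    (h₁ : l₁ ≠ []) (h₂ : l₂ ≠ []) :
    ∃ r, Alternating s r l₁ ∧ Alternating (-r) t l₂ := by
  induction l₁ generalizing s with
  | nil => exact absurd rfl h₁
  | cons a l₁ ih =>
    rcases l₁ with _ | ⟨_, l₁⟩
    · cases h with
      | single => exact absurd rfl h₂
      | cons _ _ h => exact ⟨a, single a, h⟩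
    · cases h with
      | cons _ _ h =>
        obtain ⟨r, hl, hr⟩ := ih h (List.cons_ne_nil _ _)
        exact ⟨r, .cons _ _ hl, hr⟩

end Alternating

section Flip

variable [DecidableEq V]

def flipSigns (S : Finset (Sym2 V)) (f : Sym2 V → ℤ) (e : Sym2 V) : ℤ :=
  if e ∈ S then -f e else f e

theorem flipSigns_eq_one_or_neg_one {G : SimpleGraph V} {f : Sym2 V → ℤ}
    (hf : ∀ e ∈ G.edgeSet, f e = 1 ∨ f e = -1) (S : Finset (Sym2 V)) :
    ∀ e ∈ G.edgeSet, flipSigns S f e = 1 ∨ flipSigns S f e = -1 := by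
  intro e he
  unfold flipSigns
  split_ifs <;> have := hf e he <;> omega

theorem sum_flipSigns (S T : Finset (Sym2 V)) (f : Sym2 V → ℤ) :
    ∑ e ∈ T, flipSigns S f e = ∑ e ∈ T, f e - 2 * ∑ e ∈ T ∩ S, f e := by
  rw [← sum_ite_mem, mul_sum, ← sum_sub_distrib]
  refine sum_congr rfl fun e _ => ?_
  unfold flipSigns
  split_ifs <;> ring

variable [Fintype V] {G : SimpleGraph V} [DecidableRel G.Adj] (f : Sym2 V → ℤ)
  {S : Finset (Sym2 V)}

theorem edgeSum_flipSigns (hS : S ⊆ G.edgeFinset) :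
    edgeSum G (flipSigns S f) = edgeSum G f - 2 * ∑ e ∈ S, f e := by
  rw [edgeSum_eq_sum, edgeSum_eq_sum, sum_flipSigns, inter_eq_right.mpr hS]

theorem vertexSum_flipSigns (hS : S ⊆ G.edgeFinset) (v : V) :
    vertexSum G (flipSigns S f) v = vertexSum G f v - 2 * ∑ e ∈ S with v ∈ e, f e := by
  rw [vertexSum_eq_sum, vertexSum_eq_sum, sum_flipSigns, incidenceFinset_eq_filter]
  congr 3
  ext e
  have := @hS e
  simp only [mem_inter, mem_filter]
  tauto

end Flip

section AlternatingTrail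

variable [DecidableEq V] {G : SimpleGraph V} {f : Sym2 V → ℤ}

theorem sum_incident_of_alternating {a b : V} {W : G.Walk a b} (hW : W.IsTrail) {s t : ℤ}
    (hA : Alternating s t (W.edges.map f)) (u : V) :
    ∑ e ∈ W.edges.toFinset with u ∈ e, f e
      = (if u = a then s else 0) + (if u = b then t else 0) := by
  induction W generalizing s with
  | nil => exact absurd rfl hA.ne_nil
  | @cons a x b hadj p ih =>
    have hnot : s(a, x) ∉ p.edges := ((Walk.isTrail_cons _ _).mp hW).2
    have hsplit : ∑ e ∈ (s(a, x) :: p.edges).toFinset with u ∈ e, f e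
        = (if u ∈ s(a, x) then f s(a, x) else 0)
          + ∑ e ∈ p.edges.toFinset with u ∈ e, f e := by
      rw [List.toFinset_cons, filter_insert]
      split_ifs
      · exact sum_insert (by simp [hnot])
      · rw [zero_add]
    rw [Walk.edges_cons, hsplit]
    rw [Walk.edges_cons, List.map_cons] at hA
    have hax := hadj.ne
    obtain ⟨rfl, ⟨hnil, rfl⟩ | hA⟩ := Alternating.cons_iff.mp hA
    · obtain rfl : x = b := (Walk.edges_eq_nil.mp (List.map_eq_nil_iff.mp hnil)).eq
      rw [List.map_eq_nil_iff.mp hnil]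
      simp only [List.toFinset_nil, filter_empty, sum_empty, add_zero, Sym2.mem_iff]
      grind
    · rw [ih hW.of_cons hA]
      simp only [Sym2.mem_iff]
      grind

variable [Fintype V] [DecidableRel G.Adj] {a b : V} {W : G.Walk a b} {s t : ℤ}

theorem vertexSum_flipSigns_of_alternating (hW : W.IsTrail)
    (hA : Alternating s t (W.edges.map f)) (u : V) :
    vertexSum G (flipSigns W.edges.toFinset f) u
      = vertexSum G f u - 2 * ((if u = a then s else 0) + (if u = b then t else 0)) := by
  rw [vertexSum_flipSigns f (fun e he => mem_edgeFinset.mpr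
    (W.edges_subset_edgeSet (List.mem_toFinset.mp he))), sum_incident_of_alternating hW hA]

theorem edgeSum_flipSigns_of_alternating (hW : W.IsTrail)
    (hA : Alternating s t (W.edges.map f)) :
    edgeSum G (flipSigns W.edges.toFinset f) = edgeSum G f - (s + t) := by
  rw [edgeSum_flipSigns f (fun e he => mem_edgeFinset.mpr
    (W.edges_subset_edgeSet (List.mem_toFinset.mp he))), List.sum_toFinset f hW.edges_nodup,
    hA.two_mul_sum]

end AlternatingTrail

section Saturated

variable {G : SimpleGraph V} {f : Sym2 V → ℤ}

def IsSaturated (f : Sym2 V → ℤ) {z b : V} (W : G.Walk z b) (t : ℤ) : Prop :=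
  ∀ x, G.Adj x z → f s(x, z) = -t → s(x, z) ∈ W.edges

theorem vertexSum_eq_of_saturated [Fintype V] [DecidableEq V] [DecidableRel G.Adj]
    (hf : ∀ e ∈ G.edgeSet, f e = 1 ∨ f e = -1) {z b : V} {W : G.Walk z b} (hW : W.IsTrail)
    {s t : ℤ} (hA : Alternating t s (W.edges.map f)) (hsat : IsSaturated f W t) :
    vertexSum G f z
      = t + (if z = b then s else 0) + #{e ∈ G.incidenceFinset z | e ∉ W.edges} * t := by
  have ht : t = 1 ∨ t = -1 := by
    obtain ⟨e, he, rfl⟩ := List.mem_map.mp hA.head_mem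
    exact hf e (W.edges_subset_edgeSet he)
  have hon : {e ∈ G.incidenceFinset z | e ∈ W.edges} = {e ∈ W.edges.toFinset | z ∈ e} := by
    ext e
    simp only [mem_filter, mem_incidenceFinset, List.mem_toFinset]
    exact ⟨fun h => ⟨h.2, h.1.2⟩, fun h => ⟨⟨W.edges_subset_edgeSet h.1, h.2⟩, h.1⟩⟩
  have hoff : ∀ e ∈ {e ∈ G.incidenceFinset z | e ∉ W.edges}, f e = t := by
    intro e he
    obtain ⟨hinc, hnot⟩ := mem_filter.mp he
    obtain ⟨he, hze⟩ := (mem_incidenceFinset _ _ _).mp hinc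
    obtain ⟨x, rfl⟩ := Sym2.mem_iff_exists.mp hze
    rw [Sym2.eq_swap] at he hnot ⊢
    by_contra hne
    exact hnot (hsat x (G.mem_edgeSet.mp he) (by rcases hf _ he with h | h <;> omega))
  rw [vertexSum_eq_sum, ← sum_filter_add_sum_filter_not _ (· ∈ W.edges), hon,
    sum_incident_of_alternating hW hA, sum_congr rfl hoff, sum_const, nsmul_eq_mul, if_pos rfl]

theorem exists_saturated_extension [Fintype V] [DecidableRel G.Adj] {z b : V} (W : G.Walk z b)
    (hW : W.IsTrail) {s t : ℤ} (hA : Alternating t s (W.edges.map f)) :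
    ∃ (y : V) (M : G.Walk y b) (r : ℤ), M.IsTrail ∧ Alternating r s (M.edges.map f) ∧
      IsSaturated f M r ∧ W.support ⊆ M.support := by
  by_cases hsat : IsSaturated f W t
  · exact ⟨z, W, t, hW, hA, hsat, List.Subset.refl _⟩
  obtain ⟨x, hadj, hfx, hnot⟩ :
      ∃ x, G.Adj x z ∧ f s(x, z) = -t ∧ s(x, z) ∉ W.edges := by
    simpa [IsSaturated] using hsat
  have hW' := hW.cons hadj hnot
  have hlen := hW'.length_le_card_edgeFinset
  have hA' : Alternating (-t) s ((W.cons hadj).edges.map f) := by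
    rw [Walk.edges_cons, List.map_cons, hfx]
    exact .cons _ _ (by rwa [neg_neg])
  obtain ⟨y, M, r, hM, hAM, hsatM, hsupp⟩ := exists_saturated_extension (W.cons hadj) hW' hA'
  exact ⟨y, M, r, hM, hAM, hsatM, fun u hu => hsupp (by simp [hu])⟩
termination_by #G.edgeFinset - W.length
decreasing_by
  simp only [Walk.length_cons] at hlen ⊢
  omega

theorem exists_alternating_subtrail [DecidableEq V] {v u : V} {M : G.Walk v v}
    (hM : M.IsTrail) {s : ℤ} (hA : Alternating s s (M.edges.map f)) (hu : u ∈ M.support)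
    (huv : u ≠ v) {τ : ℤ} (hτ : τ = s ∨ τ = -s) :
    ∃ D : G.Walk u v, D.IsTrail ∧ Alternating τ s (D.edges.map f) ∧ D.edges ⊆ M.edges := by
  have hedges : (M.takeUntil u hu).edges ++ (M.dropUntil u hu).edges = M.edges := by
    rw [← Walk.edges_append, M.take_spec hu]
  have hne : ∀ {a b : V} (p : G.Walk a b), a ≠ b → p.edges.map f ≠ [] := fun p hab h =>
    hab (Walk.edges_eq_nil.mp (List.map_eq_nil_iff.mp h)).eq
  rw [← hedges, List.map_append] at hA
  obtain ⟨r, hpre, hsuf⟩ := hA.exists_of_append (hne _ huv.symm) (hne _ huv)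
  have hτr : τ = r ∨ τ = -r := by
    rcases hpre.eq_or_eq_neg with rfl | rfl <;> rcases hτ with rfl | rfl <;> simp
  rcases hτr with rfl | rfl
  · refine ⟨(M.takeUntil u hu).reverse, Walk.IsTrail.reverse _ (hM.takeUntil hu), ?_,
      fun e he => ?_⟩
    · rw [Walk.edges_reverse, List.map_reverse]
      exact hpre.reverse
    · rw [Walk.edges_reverse, List.mem_reverse] at he
      exact hedges ▸ List.mem_append_left _ he
  · exact ⟨M.dropUntil u hu, hM.dropUntil hu, hsuf,
      fun e he => hedges ▸ List.mem_append_right _ he⟩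

end Saturated

section Extremal

variable [Fintype V] {G : SimpleGraph V} [DecidableRel G.Adj] {f : Sym2 V → ℤ}

structure IsExtremal (G : SimpleGraph V) [DecidableRel G.Adj] (f : Sym2 V → ℤ) : Prop where
  sign : ∀ e ∈ G.edgeSet, f e = 1 ∨ f e = -1
  le_one : ∀ v, vertexSum G f v ≤ 1
  optimal : edgeSum G f = betaS G (Fintype.card V)
  ncard_le : ∀ g : Sym2 V → ℤ, IsSignedSubmatching G g (Fintype.card V) →
    (∀ v, vertexSum G g v ≤ 1) → edgeSum G g = betaS G (Fintype.card V) →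
    {v | Odd (G.degree v) ∧ vertexSum G g v < 1}.ncard ≤
      {v | Odd (G.degree v) ∧ vertexSum G f v < 1}.ncard

def IsOnCoveringCircuit (G : SimpleGraph V) (f : Sym2 V → ℤ) (v u : V) : Prop :=
  ∃ M : G.Walk v v, M.IsTrail ∧ Alternating (-1) (-1) (M.edges.map f) ∧
    (∀ e ∈ G.incidenceSet v, e ∈ M.edges) ∧ u ∈ M.support

namespace IsExtremal

variable [DecidableEq V]

-- Flipping `W` would raise the total weight by 2, so it must break some constraint `f(E(u)) ≤ 1`.
theorem exists_one_lt_of_alternating (hE : IsExtremal G f) {a b : V} {W : G.Walk a b}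
    (hW : W.IsTrail) (hA : Alternating (-1) (-1) (W.edges.map f)) :
    ∃ u, 1 < vertexSum G f u + 2 * ((if u = a then 1 else 0) + (if u = b then 1 else 0)) := by
  by_contra! hle
  have hg := flipSigns_eq_one_or_neg_one hE.sign W.edges.toFinset
  have hgle : ∀ u, vertexSum G (flipSigns W.edges.toFinset f) u ≤ 1 := fun u => by
    have := hle u
    rw [vertexSum_flipSigns_of_alternating hW hA]
    split_ifs at * <;> omega
  have := edgeSum_le_betaS (isSignedSubmatching_card hg hgle)
  rw [edgeSum_flipSigns_of_alternating hW hA, ← hE.optimal] at this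
  omega

theorem le_vertexSum_of_closed (hE : IsExtremal G f) {v : V} {W : G.Walk v v}
    (hW : W.IsTrail) (hA : Alternating (-1) (-1) (W.edges.map f)) : -2 ≤ vertexSum G f v := by
  obtain ⟨u, hu⟩ := hE.exists_one_lt_of_alternating hW hA
  have := hE.le_one u
  split_ifs at hu with h
  · exact h ▸ (by omega)
  · omega

theorem nonneg_of_alternating (hE : IsExtremal G f) {z v : V} (hzv : z ≠ v) {W : G.Walk z v}
    (hW : W.IsTrail) (hA : Alternating (-1) (-1) (W.edges.map f)) (hv : vertexSum G f v < 0) :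
    0 ≤ vertexSum G f z := by
  obtain ⟨u, hu⟩ := hE.exists_one_lt_of_alternating hW hA
  have := hE.le_one u
  split_ifs at hu with h₁ h₂ h₂
  · exact absurd (h₁.symm.trans h₂) hzv
  · exact h₁ ▸ (by omega)
  · subst h₂
    omega
  · omega

-- Flipping `W` keeps the total weight and adds the odd vertex `z` to `O_f(G)`.
theorem vertexSum_ne_one (hE : IsExtremal G f) {z v : V} (hzv : z ≠ v) {W : G.Walk z v}
    (hW : W.IsTrail) (hA : Alternating 1 (-1) (W.edges.map f)) (hv : vertexSum G f v ≤ -2) :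
    vertexSum G f z ≠ 1 := by
  intro hz
  set g := flipSigns W.edges.toFinset f
  have hg := flipSigns_eq_one_or_neg_one hE.sign W.edges.toFinset
  have hvs := vertexSum_flipSigns_of_alternating hW hA
  have hlt : ∀ u, vertexSum G f u < 1 → vertexSum G g u < 1 := fun u hu => by
    rw [hvs]
    split_ifs <;> subst_vars <;> omega
  have hgle : ∀ u, vertexSum G g u ≤ 1 := fun u => by
    have := hE.le_one u
    rw [hvs]
    split_ifs <;> subst_vars <;> omega
  have hodd : Odd (G.degree z) := by
    rw [← Nat.not_even_iff_odd, even_degree_iff_even_vertexSum hE.sign, hz]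
    decide
  have hsub : {u | Odd (G.degree u) ∧ vertexSum G f u < 1}
      ⊂ {u | Odd (G.degree u) ∧ vertexSum G g u < 1} := by
    refine (Set.ssubset_iff_of_subset fun u hu => ?_).mpr ⟨z, ⟨hodd, ?_⟩, ?_⟩
    · exact ⟨hu.1, hlt u hu.2⟩
    · rw [hvs, if_pos rfl, if_neg hzv, hz]
      decide
    · simp [hz]
  have hle := hE.ncard_le g (isSignedSubmatching_card hg hgle) hgle
    (by rw [edgeSum_flipSigns_of_alternating hW hA, hE.optimal]; ring)
  exact (Set.ncard_lt_ncard hsub (Set.toFinite _)).not_ge hle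

theorem eq_of_saturated (hE : IsExtremal G f) {z v : V} (hv : vertexSum G f v ≤ -2)
    {W : G.Walk z v} (hW : W.IsTrail) {t : ℤ} (hA : Alternating t (-1) (W.edges.map f))
    (hsat : IsSaturated f W t) :
    z = v ∧ t = -1 ∧ ∀ e ∈ G.incidenceSet v, e ∈ W.edges := by
  have hsum := vertexSum_eq_of_saturated hE.sign hW hA hsat
  have ht : t = -1 ∨ t = 1 := by simpa [eq_comm] using hA.eq_or_eq_neg
  have hle := hE.le_one z
  rcases eq_or_ne z v with rfl | hzv
  · rw [if_pos rfl] at hsum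
    rcases ht with rfl | rfl
    · have hc : #{e ∈ G.incidenceFinset z | e ∉ W.edges} = 0 := by
        have := hE.le_vertexSum_of_closed hW hA
        omega
      refine ⟨rfl, rfl, fun e he => ?_⟩
      rw [card_eq_zero, filter_eq_empty_iff] at hc
      simpa using hc ((mem_incidenceFinset _ _ _).mpr he)
    · omega
  · rw [if_neg hzv] at hsum
    rcases ht with rfl | rfl
    · have := hE.nonneg_of_alternating hzv hW hA (by omega)
      omega
    · exact absurd (by omega) (hE.vertexSum_ne_one hzv hW hA hv)

theorem isOnCoveringCircuit_of_trail (hE : IsExtremal G f) {z v : V}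
    (hv : vertexSum G f v ≤ -2) {W : G.Walk z v} (hW : W.IsTrail) {t : ℤ}
    (hA : Alternating t (-1) (W.edges.map f)) {u : V} (hu : u ∈ W.support) :
    IsOnCoveringCircuit G f v u := by
  obtain ⟨y, M, r, hM, hAM, hsat, hsupp⟩ := exists_saturated_extension W hW hA
  obtain ⟨rfl, rfl, hcov⟩ := hE.eq_of_saturated hv hM hAM hsat
  exact ⟨M, hM, hAM, hcov, hsupp hu⟩

theorem isOnCoveringCircuit_of_adj (hE : IsExtremal G f) {v u y : V}
    (hv : vertexSum G f v ≤ -2) (hu : IsOnCoveringCircuit G f v u) (hadj : G.Adj u y) :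
    IsOnCoveringCircuit G f v y := by
  obtain ⟨M, hM, hA, hcov, hu⟩ := hu
  by_cases hy : s(u, y) ∈ M.edges
  · exact ⟨M, hM, hA, hcov, M.snd_mem_support_of_mem_edges hy⟩
  have huv : u ≠ v := by
    rintro rfl
    exact hy (hcov _ ⟨hadj, Sym2.mem_mk_left _ _⟩)
  have hsign := hE.sign _ (G.mem_edgeSet.mpr hadj.symm)
  obtain ⟨D, hD, hAD, hDM⟩ :=
    exists_alternating_subtrail hM hA hu huv (τ := -f s(y, u)) (by omega)
  have hW := hD.cons hadj.symm fun h => hy (Sym2.eq_swap ▸ hDM h)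
  refine hE.isOnCoveringCircuit_of_trail hv hW (t := f s(y, u)) ?_ (Walk.start_mem_support _)
  rw [Walk.edges_cons, List.map_cons]
  exact .cons _ _ hAD

theorem isOnCoveringCircuit (hE : IsExtremal G f) (hconn : G.Connected) {v : V}
    (hv : vertexSum G f v ≤ -2) (u : V) : IsOnCoveringCircuit G f v u := by
  obtain ⟨x, hadj, hx⟩ := exists_adj_neg_of_vertexSum_neg hE.sign (v := v) (by omega)
  have hbase : IsOnCoveringCircuit G f v v :=
    hE.isOnCoveringCircuit_of_trail hv (W := .cons hadj .nil) (by simp)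
      (by simpa [hx] using Alternating.single (-1)) (Walk.end_mem_support _)
  exact (hconn.preconnected v u).mem_of_adj_closed (s := {u | IsOnCoveringCircuit G f v u})
    (fun _ _ hadj hx => hE.isOnCoveringCircuit_of_adj hv hx hadj) hbase

theorem vertexSum_eq_zero (hE : IsExtremal G f) {v u : V} (hv : vertexSum G f v ≤ -2)
    (hu : IsOnCoveringCircuit G f v u) (huv : u ≠ v) : vertexSum G f u = 0 := by
  obtain ⟨M, hM, hA, -, hu⟩ := hu
  rcases lt_trichotomy (vertexSum G f u) 0 with hneg | h0 | hpos
  · obtain ⟨D, hD, hAD, -⟩ := exists_alternating_subtrail hM hA hu huv (τ := -1) (.inl rfl)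
    have := hE.nonneg_of_alternating huv hD hAD (by omega)
    omega
  · exact h0
  · obtain ⟨D, hD, hAD, -⟩ := exists_alternating_subtrail hM hA hu huv (τ := 1) (.inr rfl)
    have := hE.le_one u
    exact absurd (by omega) (hE.vertexSum_ne_one huv hD hAD hv)

end IsExtremal

end Extremal

theorem optimal_max_Of_vertexSum_ge [Fintype V] (G : SimpleGraph V) [DecidableRel G.Adj]
    (hconn : G.Connected) (hnotEuler : ¬ ∀ v, Even (G.degree v))
    (f : Sym2 V → ℤ) (hf : IsSignedSubmatching G f (Fintype.card V))
    (hall : ∀ v, vertexSum G f v ≤ 1)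
    (hopt : edgeSum G f = betaS G (Fintype.card V))
    (hmax : ∀ g : Sym2 V → ℤ, IsSignedSubmatching G g (Fintype.card V) →
      (∀ v, vertexSum G g v ≤ 1) →
      edgeSum G g = betaS G (Fintype.card V) →
      {v | Odd (G.degree v) ∧ vertexSum G g v < 1}.ncard ≤
        {v | Odd (G.degree v) ∧ vertexSum G f v < 1}.ncard) :
    ∀ v, -1 ≤ vertexSum G f v := by
  classical
  intro v
  by_contra! hv
  have hE : IsExtremal G f := ⟨hf.1, hall, hopt, hmax⟩
  refine hnotEuler (even_degree_of_forall_ne v fun u hu => ?_)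
  rw [even_degree_iff_even_vertexSum hE.sign,
    hE.vertexSum_eq_zero (by omega) (hE.isOnCoveringCircuit hconn (by omega) u) hu]
  exact .zero
end
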